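/- Let T ∈ 𝕋 with non-pendant vertices v_1, ..., v_k, where v_i is adjacent to exactly t_i pendant vertices. Then every maximum matching of T consists of exactly k pendant edges, one incident to each v_i, and the number of maximum matchings of T equals t_1 t_2 ⋯ t_k. -/

import Mathlib

open SimpleGraph

/-- `X` is the group inverse of `A`. -/
def IsGroupInverse {n : Type*} [Fintype n] (A X : Matrix n n ℝ) : Prop :=
  A * X * A = A ∧ X * A * X = X ∧ A * X = X * A

/-- A matching of a graph: a set of pairwise non-incident edges. -/
def IsMatching {V : Type*} (G : SimpleGraph V) (M : Finset (Sym2 V)) : Prop :=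
  (↑M : Set (Sym2 V)) ⊆ G.edgeSet ∧
    ∀ e ∈ M, ∀ f ∈ M, e ≠ f → ∀ v : V, ¬(v ∈ e ∧ v ∈ f)

/-- A maximum matching: a matching of maximum cardinality. -/
def IsMaxMatching {V : Type*} (G : SimpleGraph V) (M : Finset (Sym2 V)) : Prop :=
  IsMatching G M ∧ ∀ N : Finset (Sym2 V), IsMatching G N → N.card ≤ M.card

/-- A nonempty list of edges alternately in and out of `M`,
beginning and ending with edges of `M`. -/
def IsAltEdgeList {V : Type*} (M : Set (Sym2 V)) : List (Sym2 V) → Prop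
  | [] => False
  | [e] => e ∈ M
  | e :: f :: rest => e ∈ M ∧ f ∉ M ∧ IsAltEdgeList M rest

/-- A pair of vertices is maximally matchable if they are joined by a path that is
alternating with respect to some maximum matching. -/
def MaxMatchable {V : Type*} (G : SimpleGraph V) (u v : V) : Prop :=
  ∃ (p : G.Walk u v) (M : Finset (Sym2 V)),
    p.IsPath ∧ IsMaxMatching G M ∧ IsAltEdgeList (↑M) p.edges

/-- `G` is a star: some center `c` is adjacent to exactly the other vertices,
and there are no other edges. -/
def IsStar {V : Type*} (G : SimpleGraph V) : Prop :=
  ∃ c : V, ∀ u v : V, G.Adj u v ↔ ((u = c ∧ v ≠ c) ∨ (v = c ∧ u ≠ c))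

/-- The class 𝕋: trees with at least one non-pendant vertex in which every
non-pendant vertex is adjacent to a pendant vertex. -/
def InClassT {V : Type*} [Fintype V] (T : SimpleGraph V) [DecidableRel T.Adj] : Prop :=
  T.IsTree ∧ (∃ v, T.degree v ≠ 1) ∧
    ∀ v, T.degree v ≠ 1 → ∃ u, T.Adj v u ∧ T.degree u = 1

/-- The number of pendant neighbours of `v`. -/
def pendantNbrs {V : Type*} [Fintype V] [DecidableEq V] (T : SimpleGraph V)
    [DecidableRel T.Adj] (v : V) : ℕ :=
  ((T.neighborFinset v).filter fun u => T.degree u = 1).card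

section Aux
variable {V : Type*} [Fintype V] [DecidableEq V] {T : SimpleGraph V} [DecidableRel T.Adj]

lemma pendant_nbr_eq {a b c : V} (ha : T.degree a = 1) (hb : T.Adj a b) (hc : T.Adj a c) :
    b = c := by
  obtain ⟨x, hx⟩ := Finset.card_eq_one.1 ha
  have h1 : b ∈ T.neighborFinset a := (T.mem_neighborFinset a b).2 hb
  have h2 : c ∈ T.neighborFinset a := (T.mem_neighborFinset a c).2 hc
  rw [hx, Finset.mem_singleton] at h1 h2
  rw [h1, h2]

lemma no_pendant_edge (hT : InClassT T) {a b : V} (hab : T.Adj a b)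
    (ha : T.degree a = 1) (hb : T.degree b = 1) : False := by
  obtain ⟨htree, ⟨v0, hv0⟩, -⟩ := hT
  have hstep : ∀ x y, x ∈ ({a, b} : Set V) → T.Adj x y → y ∈ ({a, b} : Set V) := by
    intro x y hx hxy
    rcases hx with rfl | hx
    · right; exact (pendant_nbr_eq ha hxy hab) ▸ rfl
    · rw [Set.mem_singleton_iff] at hx; subst hx
      left; exact (pendant_nbr_eq hb hxy hab.symm)
  have key : ∀ {u v : V} (w : T.Walk u v), u ∈ ({a, b} : Set V) → v ∈ ({a, b} : Set V) := by
    intro u v w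
    induction w with
    | nil => exact id
    | cons h p ih => intro hu; exact ih (hstep _ _ hu h)
  obtain ⟨w⟩ := htree.isConnected.preconnected a v0
  have hmem : v0 ∈ ({a, b} : Set V) := key w (Or.inl rfl)
  rcases hmem with rfl | hmem
  · exact hv0 ha
  · rw [Set.mem_singleton_iff] at hmem; subst hmem; exact hv0 hb

lemma edge_nonpendant (hT : InClassT T) {e : Sym2 V} (he : e ∈ T.edgeSet) :
    ∃ v, v ∈ e ∧ T.degree v ≠ 1 := by
  induction e using Sym2.ind with
  | _ x y =>
    rw [mem_edgeSet] at he
    by_cases hx : T.degree x = 1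
    · by_cases hy : T.degree y = 1
      · exact absurd (no_pendant_edge hT he hx hy) not_false
      · exact ⟨y, by simp, hy⟩
    · exact ⟨x, by simp, hx⟩

end Aux

section Aux2
set_option linter.unusedSectionVars false
variable {V : Type*} [Fintype V] [DecidableEq V] {T : SimpleGraph V} [DecidableRel T.Adj]

noncomputable def npSel (T : SimpleGraph V) [DecidableRel T.Adj] (v0 : V) (e : Sym2 V) : V :=
  if h : ∃ v, v ∈ e ∧ T.degree v ≠ 1 then h.choose else v0

lemma npSel_spec (v0 : V) {e : Sym2 V} (h : ∃ v, v ∈ e ∧ T.degree v ≠ 1) :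
    npSel T v0 e ∈ e ∧ T.degree (npSel T v0 e) ≠ 1 := by
  rw [npSel, dif_pos h]
  exact ⟨h.choose_spec.1, h.choose_spec.2⟩

lemma matching_card_le (hT : InClassT T) (v0 : V) {M : Finset (Sym2 V)}
    (hM : IsMatching T M) :
    M.card ≤ (Finset.univ.filter fun v => T.degree v ≠ 1).card := by
  apply Finset.card_le_card_of_injOn (npSel T v0)
  · intro e he
    have h := edge_nonpendant hT (hM.1 he)
    simp only [Finset.mem_coe, Finset.mem_filter, Finset.mem_univ, true_and]
    exact (npSel_spec v0 h).2
  · intro e he e' he' hfe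
    by_contra hne
    have h := edge_nonpendant hT (hM.1 he)
    have h' := edge_nonpendant hT (hM.1 he')
    exact hM.2 e he e' he' hne (npSel T v0 e) ⟨(npSel_spec _ h).1, hfe ▸ (npSel_spec _ h').1⟩

noncomputable def matchOf (T : SimpleGraph V) [DecidableRel T.Adj]
    (g : (a : V) → a ∈ (Finset.univ.filter fun v => T.degree v ≠ 1) → V) : Finset (Sym2 V) :=
  (Finset.univ.filter fun v => T.degree v ≠ 1).attach.image fun s => s(s.1, g s.1 s.2)

lemma mem_matchOf {g : (a : V) → a ∈ (Finset.univ.filter fun v => T.degree v ≠ 1) → V}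
    {e : Sym2 V} :
    e ∈ matchOf T g ↔ ∃ (a : V) (ha : a ∈ (Finset.univ.filter fun v => T.degree v ≠ 1)),
      e = s(a, g a ha) := by
  simp only [matchOf, Finset.mem_image, Finset.mem_attach, true_and, Subtype.exists]
  constructor
  · rintro ⟨a, ha, rfl⟩; exact ⟨a, ha, rfl⟩
  · rintro ⟨a, ha, rfl⟩; exact ⟨a, ha, rfl⟩

lemma matchOf_props {g : (a : V) → a ∈ (Finset.univ.filter fun v => T.degree v ≠ 1) → V}
    (hg : ∀ a ha, T.Adj a (g a ha) ∧ T.degree (g a ha) = 1) :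
    IsMatching T (matchOf T g) ∧
      (matchOf T g).card = (Finset.univ.filter fun v => T.degree v ≠ 1).card := by
  have hSa : ∀ a, a ∈ (Finset.univ.filter fun v => T.degree v ≠ 1) → T.degree a ≠ 1 := by
    intro a ha; simpa using ha
  refine ⟨⟨?_, ?_⟩, ?_⟩
  · intro e he
    rw [Finset.mem_coe, mem_matchOf] at he
    obtain ⟨a, ha, rfl⟩ := he
    exact (mem_edgeSet T).2 (hg a ha).1
  · intro e he e' he' hne v hv
    rw [mem_matchOf] at he he'
    obtain ⟨a, ha, rfl⟩ := he
    obtain ⟨b, hb, rfl⟩ := he'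
    have hv1 := hv.1; have hv2 := hv.2
    rw [Sym2.mem_iff] at hv1 hv2
    have hab : a = b := by
      rcases hv1 with h1 | h1
      · rcases hv2 with h2 | h2
        · rw [← h1, ← h2]
        · exact absurd ((h1.symm.trans h2) ▸ (hg b hb).2) (hSa a ha)
      · rcases hv2 with h2 | h2
        · exact absurd ((h2.symm.trans h1) ▸ (hg a ha).2) (hSa b hb)
        · exact pendant_nbr_eq (h1 ▸ (hg a ha).2) (h1 ▸ (hg a ha).1.symm)
            (h2 ▸ (hg b hb).1.symm)
    subst hab
    exact hne rfl
  · rw [matchOf, Finset.card_image_of_injOn, Finset.card_attach]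
    intro s _ t _ hst
    rw [Sym2.eq_iff] at hst
    rcases hst with ⟨h1, _⟩ | ⟨h1, h2⟩
    · exact Subtype.ext h1
    · exact absurd (h1 ▸ (hg t.1 t.2).2) (hSa s.1 s.2)
end Aux2

section Aux3
set_option linter.unusedSectionVars false
variable {V : Type*} [Fintype V] [DecidableEq V] {T : SimpleGraph V} [DecidableRel T.Adj]

lemma max_card_eq (hT : InClassT T) (v0 : V) {M : Finset (Sym2 V)}
    (hM : IsMaxMatching T M) :
    M.card = (Finset.univ.filter fun v => T.degree v ≠ 1).card := by
  refine le_antisymm (matching_card_le hT v0 hM.1) ?_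
  obtain ⟨htree, hex, hpend⟩ := hT
  set g0 : (a : V) → a ∈ (Finset.univ.filter fun v => T.degree v ≠ 1) → V :=
    fun a ha => (hpend a (by simpa using ha)).choose with hg0
  have hg0spec : ∀ a ha, T.Adj a (g0 a ha) ∧ T.degree (g0 a ha) = 1 :=
    fun a ha => (hpend a (by simpa using ha)).choose_spec
  have h := matchOf_props hg0spec
  calc (Finset.univ.filter fun v => T.degree v ≠ 1).card = (matchOf T g0).card := h.2.symm
    _ ≤ M.card := hM.2 _ h.1

lemma max_image_eq (hT : InClassT T) (v0 : V) {M : Finset (Sym2 V)}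
    (hM : IsMaxMatching T M) :
    M.image (npSel T v0) = Finset.univ.filter fun v => T.degree v ≠ 1 := by
  have hinj : Set.InjOn (npSel T v0) ↑M := by
    intro e he e' he' hfe
    by_contra hne
    have h := edge_nonpendant hT (hM.1.1 he)
    have h' := edge_nonpendant hT (hM.1.1 he')
    exact hM.1.2 e he e' he' hne (npSel T v0 e) ⟨(npSel_spec _ h).1, hfe ▸ (npSel_spec _ h').1⟩
  have hsub : M.image (npSel T v0) ⊆ Finset.univ.filter fun v => T.degree v ≠ 1 := by
    intro v hv
    rw [Finset.mem_image] at hv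
    obtain ⟨e, he, rfl⟩ := hv
    have h := edge_nonpendant hT (hM.1.1 he)
    simp only [Finset.mem_filter, Finset.mem_univ, true_and]
    exact (npSel_spec v0 h).2
  refine Finset.eq_of_subset_of_card_le hsub ?_
  rw [Finset.card_image_of_injOn hinj, max_card_eq hT v0 hM]

/-- every edge of a max matching has a nonpendant and a pendant endpoint -/
lemma max_edge_structure (hT : InClassT T) (v0 : V) {M : Finset (Sym2 V)}
    (hM : IsMaxMatching T M) {e : Sym2 V} (he : e ∈ M) :
    ∃ x y, e = s(x, y) ∧ T.degree x ≠ 1 ∧ T.degree y = 1 ∧ T.Adj x y ∧ x = npSel T v0 e := by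
  have hmem : ∀ {f : Sym2 V}, f ∈ M → npSel T v0 f ∈ f ∧ T.degree (npSel T v0 f) ≠ 1 :=
    fun hf => npSel_spec v0 (edge_nonpendant hT (hM.1.1 hf))
  have hsurj := max_image_eq hT v0 hM
  -- any nonpendant vertex of an edge of M equals npSel of that edge
  have hkey : ∀ x, x ∈ e → T.degree x ≠ 1 → x = npSel T v0 e := by
    intro x hx hdx
    have hxS : x ∈ Finset.univ.filter fun v => T.degree v ≠ 1 := by simpa using hdx
    rw [← hsurj, Finset.mem_image] at hxS
    obtain ⟨e', he', hxe'⟩ := hxS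
    have hee : e' = e := by
      by_contra hne
      exact hM.1.2 e' he' e he hne x ⟨hxe' ▸ (hmem he').1, hx⟩
    rw [← hxe', hee]
  have heE := hM.1.1 he
  induction e using Sym2.ind with
  | _ x y =>
    have hadj : T.Adj x y := (mem_edgeSet T).1 heE
    have hxy : x ≠ y := hadj.ne
    by_cases hx : T.degree x = 1
    · have hy : T.degree y ≠ 1 := fun hy => no_pendant_edge hT hadj hx hy
      exact ⟨y, x, Sym2.eq_swap.symm, hy, hx, hadj.symm, hkey y (by simp) hy⟩
    · have hy : T.degree y = 1 := by
        by_contra hy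
        have h1 := hkey x (by simp) hx
        have h2 := hkey y (by simp) hy
        exact hxy (h1.trans h2.symm)
      exact ⟨x, y, rfl, hx, hy, hadj, hkey x (by simp) hx⟩
end Aux3

section Aux4
set_option linter.unusedSectionVars false
variable {V : Type*} [Fintype V] [DecidableEq V] {T : SimpleGraph V} [DecidableRel T.Adj]

noncomputable def pendantT (T : SimpleGraph V) [DecidableRel T.Adj] : V → Finset V :=
  fun v => (T.neighborFinset v).filter fun u => T.degree u = 1

lemma max_eq_matchOf (hT : InClassT T) (v0 : V) {M : Finset (Sym2 V)}
    (hM : IsMaxMatching T M) :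
    ∃ g ∈ (Finset.univ.filter fun v => T.degree v ≠ 1).pi (pendantT T), matchOf T g = M := by
  have hsurj := max_image_eq hT v0 hM
  have hchoice : ∀ a, a ∈ (Finset.univ.filter fun v => T.degree v ≠ 1) →
      ∃ y, s(a, y) ∈ M ∧ T.Adj a y ∧ T.degree y = 1 := by
    intro a ha
    have haS := ha
    rw [← hsurj, Finset.mem_image] at haS
    obtain ⟨e, he, hae⟩ := haS
    obtain ⟨x, y, rfl, hdx, hdy, hadj, hxsel⟩ := max_edge_structure hT v0 hM he
    have hax : a = x := hae.symm.trans hxsel.symm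
    subst hax
    exact ⟨y, he, hadj, hdy⟩
  refine ⟨fun a ha => (hchoice a ha).choose, ?_, ?_⟩
  · rw [Finset.mem_pi]
    intro a ha
    have h := (hchoice a ha).choose_spec
    simp only [pendantT, Finset.mem_filter, mem_neighborFinset]
    exact ⟨h.2.1, h.2.2⟩
  · have hg : ∀ a ha, T.Adj a ((hchoice a ha).choose) ∧ T.degree ((hchoice a ha).choose) = 1 :=
      fun a ha => ⟨(hchoice a ha).choose_spec.2.1, (hchoice a ha).choose_spec.2.2⟩
    have hsub : matchOf T (fun a ha => (hchoice a ha).choose) ⊆ M := by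
      intro e he
      rw [mem_matchOf] at he
      obtain ⟨a, ha, rfl⟩ := he
      exact (hchoice a ha).choose_spec.1
    exact Finset.eq_of_subset_of_card_le hsub
      (by rw [(matchOf_props hg).2, max_card_eq hT v0 hM])

lemma matchOf_injOn :
    Set.InjOn (matchOf T) ↑((Finset.univ.filter fun v => T.degree v ≠ 1).pi (pendantT T)) := by
  intro g hg g' hg' heq
  rw [Finset.mem_coe, Finset.mem_pi] at hg hg'
  have hpend : ∀ (a : V) (ha : a ∈ Finset.univ.filter fun v => T.degree v ≠ 1),
      T.degree (g' a ha) = 1 := by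
    intro a ha
    have := hg' a ha
    simp only [pendantT, Finset.mem_filter] at this
    exact this.2
  funext a ha
  have hmem : s(a, g a ha) ∈ matchOf T g' := by
    rw [← heq, mem_matchOf]; exact ⟨a, ha, rfl⟩
  rw [mem_matchOf] at hmem
  obtain ⟨b, hb, hab⟩ := hmem
  rw [Sym2.eq_iff] at hab
  rcases hab with ⟨h1, h2⟩ | ⟨h1, h2⟩
  · subst h1; exact h2
  · exfalso
    have haS : T.degree a ≠ 1 := by simpa using ha
    exact haS (h1 ▸ hpend b hb)

lemma maxMatchings_eq (hT : InClassT T) (v0 : V) :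
    {M : Finset (Sym2 V) | IsMaxMatching T M} =
      ↑(((Finset.univ.filter fun v => T.degree v ≠ 1).pi (pendantT T)).image (matchOf T)) := by
  ext M
  simp only [Set.mem_setOf_eq, Finset.coe_image, Set.mem_image, Finset.mem_coe]
  constructor
  · intro hM
    obtain ⟨g, hg, hgM⟩ := max_eq_matchOf hT v0 hM
    exact ⟨g, hg, hgM⟩
  · rintro ⟨g, hg, rfl⟩
    rw [Finset.mem_pi] at hg
    have hgspec : ∀ a ha, T.Adj a (g a ha) ∧ T.degree (g a ha) = 1 := by
      intro a ha
      have := hg a ha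
      simp only [pendantT, Finset.mem_filter, mem_neighborFinset] at this
      exact this
    obtain ⟨hmatch, hcard⟩ := matchOf_props hgspec
    exact ⟨hmatch, fun N hN => hcard ▸ matching_card_le hT v0 hN⟩
end Aux4

/-- In a tree of class 𝕋 with k non-pendant vertices, each adjacent to
tᵢ pendant vertices, every maximum matching consists of exactly k pendant edges, one
incident to each non-pendant vertex, and the number of maximum matchings is ∏ tᵢ. -/
theorem classT_max_matchings_count {V : Type*} [Fintype V] [DecidableEq V]
    (T : SimpleGraph V) [DecidableRel T.Adj] (hT : InClassT T) :
    (∀ M : Finset (Sym2 V), IsMaxMatching T M →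
      M.card = (Finset.univ.filter fun v => T.degree v ≠ 1).card ∧
      (∀ e ∈ M, ∃ v ∈ e, T.degree v = 1) ∧
      ∀ v, T.degree v ≠ 1 → ∃! e, e ∈ M ∧ v ∈ e) ∧
    {M : Finset (Sym2 V) | IsMaxMatching T M}.ncard =
      ∏ v ∈ Finset.univ.filter (fun v => T.degree v ≠ 1), pendantNbrs T v := by
  classical
  have v0 : V := hT.2.1.choose
  constructor
  · intro M hM
    refine ⟨max_card_eq hT v0 hM, ?_, ?_⟩
    · intro e he
      obtain ⟨x, y, rfl, hdx, hdy, hadj, -⟩ := max_edge_structure hT v0 hM he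
      exact ⟨y, by simp, hdy⟩
    · intro v hv
      have hsurj := max_image_eq hT v0 hM
      have hvS : v ∈ Finset.univ.filter fun v => T.degree v ≠ 1 := by simpa using hv
      rw [← hsurj, Finset.mem_image] at hvS
      obtain ⟨e, he, hve⟩ := hvS
      have hmem : v ∈ e := hve ▸ (npSel_spec v0 (edge_nonpendant hT (hM.1.1 he))).1
      refine ⟨e, ⟨he, hmem⟩, ?_⟩
      rintro e' ⟨he', hve'⟩
      by_contra hne
      exact hM.1.2 e' he' e he hne v ⟨hve', hmem⟩
  · rw [maxMatchings_eq hT v0, Set.ncard_coe_finset,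
      Finset.card_image_of_injOn matchOf_injOn, Finset.card_pi]
    rfl
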